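/- arXiv:2407.00706 — 2 statements merged into one kernel-verified Lean document; each statement's English description precedes it below -/
import Mathlib

section
/- Let n and K be positive integers with K ≤ n, and let a : Fin K → ℕ be cluster sizes satisfying a i ≥ 1 for all i and ∑ i, a i = n. Then the pair-count sum ∑_{i < j} a i * a j is at least (n − K + 1)*(K − 1) + (K − 1)*(K − 2)/2, and this lower bound is attained by the configuration in which one cluster has size n − K + 1 and the remaining K − 1 clusters each have size 1. -/
private theorem keyid (K : ℕ) (a : Fin K → ℕ) :
    (∑ i, a i) * (∑ i, a i) =
      ∑ i, a i * a i +
        2 * ∑ p ∈ Finset.univ.filter (fun p : Fin K × Fin K => p.1 < p.2), a p.1 * a p.2 := by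
  rw [Finset.sum_mul_sum, ← Finset.sum_product', Finset.univ_product_univ]
  have hsplit := Finset.sum_filter_add_sum_filter_not (Finset.univ : Finset (Fin K × Fin K))
    (fun p => p.1 < p.2) (fun p => a p.1 * a p.2)
  have hsplit2 := Finset.sum_filter_add_sum_filter_not
    (Finset.univ.filter (fun p : Fin K × Fin K => ¬ p.1 < p.2))
    (fun p => p.1 = p.2) (fun p => a p.1 * a p.2)
  have hdiag : ∑ p ∈ (Finset.univ.filter (fun p : Fin K × Fin K => ¬ p.1 < p.2)).filter
      (fun p => p.1 = p.2), a p.1 * a p.2 = ∑ i, a i * a i := by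
    rw [Finset.filter_filter]
    apply Finset.sum_nbij' (fun p => p.1) (fun i => (i, i)) <;> simp +contextual
  have hgt : (Finset.univ.filter (fun p : Fin K × Fin K => ¬ p.1 < p.2)).filter
      (fun p => ¬ p.1 = p.2) = Finset.univ.filter (fun p : Fin K × Fin K => p.2 < p.1) := by
    rw [Finset.filter_filter]
    apply Finset.filter_congr
    intro p _
    constructor
    · rintro ⟨h1, h2⟩
      exact lt_of_le_of_ne (not_lt.mp h1) (fun h => h2 h.symm)
    · exact fun h => ⟨asymm h, (ne_of_lt h).symm⟩
  have hswap : ∑ p ∈ Finset.univ.filter (fun p : Fin K × Fin K => p.2 < p.1), a p.1 * a p.2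
      = ∑ p ∈ Finset.univ.filter (fun p : Fin K × Fin K => p.1 < p.2), a p.1 * a p.2 := by
    apply Finset.sum_nbij' (fun p => Prod.swap p) (fun p => Prod.swap p) <;>
      simp [mul_comm]
  rw [← hsplit, ← hsplit2, hdiag, hgt, hswap]
  ring

private theorem even_kk (K : ℕ) : 2 ∣ (K - 1) * (K - 2) := by
  rcases Nat.even_or_odd (K - 1) with h | h
  · exact Dvd.dvd.mul_right h.two_dvd _
  · have : 2 ∣ (K - 2) := by
      rcases h with ⟨t, ht⟩
      omega
    exact Dvd.dvd.mul_left this _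

/-- Maximal cluster-imbalance gives the minimum of the pair-count sum
`∑_{i<j} a i * a j`: for cluster sizes `a : Fin K → ℕ` with `a i ≥ 1` and
`∑ i, a i = n`, the sum is at least `(n - K + 1) * (K - 1) + (K - 1) * (K - 2) / 2`,
and this bound is attained when one cluster has size `n - K + 1` and the remaining
`K - 1` clusters each have size `1`. -/
theorem stmt0 (n K : ℕ) (hn : 0 < n) (hK : 0 < K) (hKn : K ≤ n)
    (a : Fin K → ℕ) (ha : ∀ i, 1 ≤ a i) (hsum : ∑ i, a i = n) :
    (n - K + 1) * (K - 1) + (K - 1) * (K - 2) / 2 ≤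
      ∑ p ∈ Finset.univ.filter (fun p : Fin K × Fin K => p.1 < p.2), a p.1 * a p.2
    ∧
    ∀ b : Fin K → ℕ, (∃ i₀ : Fin K, b i₀ = n - K + 1 ∧ ∀ i, i ≠ i₀ → b i = 1) →
      ∑ p ∈ Finset.univ.filter (fun p : Fin K × Fin K => p.1 < p.2), b p.1 * b p.2
        = (n - K + 1) * (K - 1) + (K - 1) * (K - 2) / 2 := by
  set m := n - K + 1 with hm
  set E := m * (K - 1) + (K - 1) * (K - 2) / 2 with hE
  -- arithmetic fact: n² = m² + (K-1) + 2E
  have hne : n * n = m * m + (K - 1) + 2 * E := by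
    obtain ⟨t, ht⟩ := even_kk K
    have hdiv : (K - 1) * (K - 2) / 2 = t := by omega
    have h1 : n = m + (K - 1) := by omega
    have h2 : (K - 1) * (K - 1) = (K - 1) * (K - 2) + (K - 1) := by
      rcases Nat.eq_zero_or_pos (K - 1) with h | h
      · simp [h]
      · have hk : K - 1 = (K - 2) + 1 := by omega
        rw [hk]; ring
    rw [hE, hdiv, h1]
    nlinarith [ht, h2]
  constructor
  · -- lower bound
    have hkey := keyid K a
    rw [hsum] at hkey
    -- ∑ a² ≤ m² + (K-1)
    have hsq : ∑ i, a i * a i ≤ m * m + (K - 1) := by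
      have hcs : ∑ i, (a i - 1) = n - K := by
        have h : ∑ i, ((a i - 1) + 1) = n := by
          rw [← hsum]; exact Finset.sum_congr rfl fun i _ => by have := ha i; omega
        rw [Finset.sum_add_distrib] at h
        simp at h
        omega
      have hb : ∀ i, (a i - 1) ≤ n - K := by
        intro i
        calc a i - 1 ≤ ∑ j, (a j - 1) :=
              Finset.single_le_sum (f := fun j => a j - 1)
                (fun j _ => Nat.zero_le _) (Finset.mem_univ i)
          _ = n - K := hcs
      have hsqb : ∑ i, (a i - 1) * (a i - 1) ≤ (n - K) * (n - K) := by
        calc ∑ i, (a i - 1) * (a i - 1) ≤ ∑ i, (a i - 1) * (n - K) :=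
              Finset.sum_le_sum fun i _ => Nat.mul_le_mul_left _ (hb i)
          _ = (n - K) * (n - K) := by rw [← Finset.sum_mul, hcs]
      have hexp : ∑ i, a i * a i = ∑ i, (a i - 1) * (a i - 1) + 2 * (n - K) + K := by
        have hterm : ∀ i, a i * a i = (a i - 1) * (a i - 1) + 2 * (a i - 1) + 1 := by
          intro i
          obtain ⟨c, hc⟩ : ∃ c, a i = c + 1 := ⟨a i - 1, by have := ha i; omega⟩
          simp [hc]; ring
        rw [Finset.sum_congr rfl fun i _ => hterm i]
        rw [Finset.sum_add_distrib, Finset.sum_add_distrib, ← Finset.mul_sum, hcs]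
        simp [add_assoc]
      have : m * m = (n - K) * (n - K) + 2 * (n - K) + 1 := by rw [hm]; ring
      omega
    omega
  · -- attainment
    rintro b ⟨i₀, hb0, hb1⟩
    have hkey := keyid K b
    have hbs : ∑ i, b i = n := by
      rw [← Finset.add_sum_erase _ b (Finset.mem_univ i₀), hb0]
      have : ∑ i ∈ Finset.univ.erase i₀, b i = K - 1 := by
        rw [Finset.sum_congr rfl fun i hi => hb1 i (Finset.mem_erase.mp hi).1]
        simp [Finset.card_erase_of_mem]
      omega
    have hbsq : ∑ i, b i * b i = m * m + (K - 1) := by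
      rw [← Finset.add_sum_erase _ (fun i => b i * b i) (Finset.mem_univ i₀), hb0]
      have : ∑ i ∈ Finset.univ.erase i₀, b i * b i = K - 1 := by
        rw [Finset.sum_congr rfl fun i hi => by rw [hb1 i (Finset.mem_erase.mp hi).1]]
        simp [Finset.card_erase_of_mem]
      omega
    rw [hbs, hbsq] at hkey
    omega
end

section
/- Let n ≥ 1, μ > 0 and v ∈ ℝ^n. Define x* ∈ ℝ^n componentwise by: x*_i = v_i + μ if v_i + μ < 0; x*_i = 0 if v_i ≤ 0 ≤ v_i + μ; and x*_i = v_i if v_i > 0 (equivalently, x*_i = median(v_i + μ, 0, v_i)). Then x* is the unique minimizer over ℝ^n of the function ξ ↦ μ·∑_{i=1}^n max{−ξ_i, 0} + (1/2)·‖ξ − v‖₂². -/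
/-!
The objective `F(ξ) = μ ∑ max(-ξᵢ, 0) + ½‖ξ - v‖²` is separable, and each coordinate term is
`1`-strongly convex with minimizer `pᵢ = median(vᵢ + μ, 0, vᵢ)`. Hence
`F(p) + ½‖ξ - p‖² ≤ F(ξ)` for every `ξ`, which gives both minimality and uniqueness of `p`.
-/

open Finset

namespace NegPartPenalty

noncomputable def prox (μ v : ℝ) : ℝ :=
  if v + μ < 0 then v + μ else if 0 < v then v else 0

noncomputable def objective (μ v t : ℝ) : ℝ :=
  μ * max (-t) 0 + (1 / 2) * (t - v) ^ 2

theorem objective_prox_add_sq_le {μ : ℝ} (hμ : 0 ≤ μ) (v t : ℝ) :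
    objective μ v (prox μ v) + (1 / 2) * (t - prox μ v) ^ 2 ≤ objective μ v t := by
  unfold objective prox
  simp only [max_def]
  split_ifs <;> nlinarith

section Vector

variable {ι : Type*} [Fintype ι]

noncomputable def objectiveVec (μ : ℝ) (v ξ : ι → ℝ) : ℝ :=
  μ * ∑ i, max (-(ξ i)) 0 + (1 / 2) * ∑ i, (ξ i - v i) ^ 2

theorem objectiveVec_eq_sum (μ : ℝ) (v ξ : ι → ℝ) :
    objectiveVec μ v ξ = ∑ i, objective μ (v i) (ξ i) := by
  simp only [objectiveVec, objective, sum_add_distrib, mul_sum]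

theorem objectiveVec_prox_add_sum_sq_le {μ : ℝ} (hμ : 0 ≤ μ) (v ξ : ι → ℝ) :
    objectiveVec μ v (fun i => prox μ (v i)) + (1 / 2) * ∑ i, (ξ i - prox μ (v i)) ^ 2
      ≤ objectiveVec μ v ξ := by
  rw [objectiveVec_eq_sum, objectiveVec_eq_sum, mul_sum, ← sum_add_distrib]
  exact sum_le_sum fun i _ => objective_prox_add_sq_le hμ (v i) (ξ i)

theorem objectiveVec_prox_le {μ : ℝ} (hμ : 0 ≤ μ) (v ξ : ι → ℝ) :
    objectiveVec μ v (fun i => prox μ (v i)) ≤ objectiveVec μ v ξ :=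
  (le_add_of_nonneg_right (by positivity)).trans (objectiveVec_prox_add_sum_sq_le hμ v ξ)

theorem eq_prox_of_objectiveVec_le {μ : ℝ} (hμ : 0 ≤ μ) {v y : ι → ℝ}
    (hy : objectiveVec μ v y ≤ objectiveVec μ v (fun i => prox μ (v i))) :
    y = fun i => prox μ (v i) := by
  have hsum : ∑ i, (y i - prox μ (v i)) ^ 2 = 0 :=
    le_antisymm (by linarith [objectiveVec_prox_add_sum_sq_le hμ v y])
      (sum_nonneg fun i _ => sq_nonneg _)
  funext i
  have hi := (sum_eq_zero_iff_of_nonneg fun j _ => sq_nonneg (y j - prox μ (v j))).1 hsum i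
    (mem_univ i)
  exact sub_eq_zero.1 (pow_eq_zero_iff two_ne_zero |>.1 hi)

end Vector

end NegPartPenalty

theorem stmt8_general (n : ℕ) (μ : ℝ) (hμ : 0 < μ) (v : Fin n → ℝ) :
    (∀ ξ : Fin n → ℝ,
        μ * ∑ i, max (-(if v i + μ < 0 then v i + μ else if 0 < v i then v i else 0)) 0
          + (1 / 2) * ∑ i,
              ((if v i + μ < 0 then v i + μ else if 0 < v i then v i else 0) - v i) ^ 2
        ≤ μ * ∑ i, max (-(ξ i)) 0 + (1 / 2) * ∑ i, (ξ i - v i) ^ 2)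
    ∧
    ∀ y : Fin n → ℝ,
      (∀ ξ : Fin n → ℝ,
        μ * ∑ i, max (-(y i)) 0 + (1 / 2) * ∑ i, (y i - v i) ^ 2
          ≤ μ * ∑ i, max (-(ξ i)) 0 + (1 / 2) * ∑ i, (ξ i - v i) ^ 2) →
      y = fun i => if v i + μ < 0 then v i + μ else if 0 < v i then v i else 0 :=
  ⟨fun ξ => NegPartPenalty.objectiveVec_prox_le hμ.le v ξ,
    fun _ hy => NegPartPenalty.eq_prox_of_objectiveVec_le hμ.le (hy _)⟩

/-- Closed form of the proximal operator of `x ↦ μ ‖max{-x, 0}‖₁`: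
for `μ > 0` and `v ∈ ℝ^n`, the vector `x*` with `x*_i = v_i + μ` if `v_i + μ < 0`,
`x*_i = v_i` if `v_i > 0`, and `x*_i = 0` otherwise (i.e. if `v_i ≤ 0 ≤ v_i + μ`),
is the unique minimizer of `ξ ↦ μ ∑ i, max{-ξ_i, 0} + (1/2) ‖ξ - v‖₂²`. -/
theorem stmt8 (n : ℕ) (hn : 1 ≤ n) (μ : ℝ) (hμ : 0 < μ) (v : Fin n → ℝ) :
    (∀ ξ : Fin n → ℝ,
        μ * ∑ i, max (-(if v i + μ < 0 then v i + μ else if 0 < v i then v i else 0)) 0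
          + (1 / 2) * ∑ i,
              ((if v i + μ < 0 then v i + μ else if 0 < v i then v i else 0) - v i) ^ 2
        ≤ μ * ∑ i, max (-(ξ i)) 0 + (1 / 2) * ∑ i, (ξ i - v i) ^ 2)
    ∧
    ∀ y : Fin n → ℝ,
      (∀ ξ : Fin n → ℝ,
        μ * ∑ i, max (-(y i)) 0 + (1 / 2) * ∑ i, (y i - v i) ^ 2
          ≤ μ * ∑ i, max (-(ξ i)) 0 + (1 / 2) * ∑ i, (ξ i - v i) ^ 2) →
      y = fun i => if v i + μ < 0 then v i + μ else if 0 < v i then v i else 0 :=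
  stmt8_general n μ hμ v
end
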